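/- arXiv:1602.03236 — 2 statements merged into one kernel-verified Lean document; each statement's English description precedes it below -/
import Mathlib

section
/- For n ≥ 3, the diameter of the orthogonality graph O(T_n) of n×n upper triangular matrices over any field F is exactly 4: any two vertices are joined by a path of length at most 4, and there exist vertices at distance exactly 4. -/
/-!
A singular upper triangular `X` has a zero diagonal entry `X k k`, hence a kernel vector supported
on the indices `≤ k` and a left kernel vector supported on the indices `≥ k`; their outer product is
a rank-one upper triangular neighbour of `X`. Two such rank-one matrices `v wᵀ` and `v' w'ᵀ` have a
common rank-one neighbour `u zᵀ` with `u ⊥ w, w'` and `z ⊥ v, v'`: for `n ≥ 3` there is room to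
choose `u` and `z` with compatible supports. This gives paths of length at most `4`.

For the lower bound, a matrix orthogonal to `1 - P` satisfies `X = P X P`, so the neighbours of
`A = 1 - E₁₁` are the nonzero multiples of `E₁₁` and those of `B = 1 - (Eₙₙ - E₁ₙ)` are the nonzero
multiples of `Eₙₙ - E₁ₙ`. These sets are disjoint, `A` and `B` are not adjacent, and
`E₁₁ (Eₙₙ - E₁ₙ) = -E₁ₙ ≠ 0`, so `A` and `B` are at distance `4`.
-/

open Matrix

/-- The orthogonality graph of the algebra of upper triangular `n × n` matrices
over `F`: vertices are the nonzero singular (equivalently, two-sided zero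
divisor) upper triangular matrices, with an edge between distinct `A`, `B` iff
`A * B = B * A = 0`. -/
def orthoGraph (F : Type*) [Field F] (n : ℕ) :
    SimpleGraph {A : Matrix (Fin n) (Fin n) F // A.BlockTriangular id ∧ A ≠ 0 ∧ A.det = 0} where
  Adj X Y := X ≠ Y ∧ X.1 * Y.1 = 0 ∧ Y.1 * X.1 = 0
  symm := ⟨fun X Y h => ⟨h.1.symm, h.2.2, h.2.1⟩⟩
  loopless := ⟨fun X h => h.1 rfl⟩

open Finset

namespace Matrix

section CommRing

variable {ι R : Type*} [Fintype ι] [CommRing R]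

theorem dotProduct_eq_zero_of_forall_or {u v : ι → R} (h : ∀ i, u i = 0 ∨ v i = 0) :
    u ⬝ᵥ v = 0 :=
  sum_eq_zero fun i _ => (h i).elim (fun hu => by simp [hu]) fun hv => by simp [hv]

theorem vecMulVec_mul_vecMulVec_eq_zero {v w u z : ι → R} (h : w ⬝ᵥ u = 0) :
    vecMulVec v w * vecMulVec u z = 0 := by
  rw [vecMulVec_mul_vecMulVec, h, zero_smul, vecMulVec_zero]

theorem exists_eq_smul_vecMulVec_of_mul_one_sub_eq_zero
    [DecidableEq ι] {a b : ι → R} {X : Matrix ι ι R} (h : X * (1 - vecMulVec a b) = 0)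
    (h' : (1 - vecMulVec a b) * X = 0) : ∃ c : R, X = c • vecMulVec a b := by
  rw [mul_sub, mul_one, sub_eq_zero] at h
  rw [sub_mul, one_mul, sub_eq_zero] at h'
  refine ⟨b ᵥ* X ⬝ᵥ a, ?_⟩
  conv_lhs => rw [h', h, ← mul_assoc, vecMulVec_mul, vecMulVec_mul_vecMulVec, vecMulVec_smul]

end CommRing

variable {ι F : Type*} [Field F]

section Dimension

variable [Fintype ι]

theorem exists_ne_zero_forall_dotProduct_eq_zero {κ : Type*} [Fintype κ] (c : κ → ι → F)
    (s : Finset ι) (hs : Fintype.card κ < #s) :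
    ∃ u : ι → F, u ≠ 0 ∧ (∀ j ∉ s, u j = 0) ∧ ∀ t, c t ⬝ᵥ u = 0 := by
  classical
  let L : (s → F) →ₗ[F] κ → F := (Matrix.of fun t (j : s) => c t j).mulVecLin
  obtain ⟨u, hu, hu0⟩ := (Submodule.ne_bot_iff _).mp <|
    LinearMap.ker_ne_bot_of_finrank_lt (f := L) (by simpa using hs)
  refine ⟨fun j => if h : j ∈ s then u ⟨j, h⟩ else 0, ?_, fun j hj => dif_neg hj, fun t => ?_⟩
  · contrapose! hu0
    ext ⟨j, hj⟩
    simpa [hj] using congrFun hu0 j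
  · simp only [dotProduct, mul_dite, mul_zero]
    rw [← sum_attach_eq_sum_dite s fun j => c t j * u j]
    simpa [L, mulVec, dotProduct] using congrFun hu t

variable [LinearOrder ι]

theorem exists_mulVec_eq_zero_of_isUpperTriangular {A : Matrix ι ι F} (hA : A.IsUpperTriangular)
    {k : ι} (hk : A k k = 0) :
    ∃ v : ι → F, v ≠ 0 ∧ (∀ i, k < i → v i = 0) ∧ A *ᵥ v = 0 := by
  classical
  -- the `k + 1` columns `j ≤ k` of `A` only have entries in the `k` rows `i < k`
  have hcard : Fintype.card {i // i < k} < #{j | j ≤ k} := by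
    rw [Fintype.card_subtype]
    refine card_lt_card <| (ssubset_iff_of_subset fun i => ?_).mpr ⟨k, by simp, by simp⟩
    simpa using le_of_lt
  obtain ⟨v, hv0, hvk, hv⟩ :=
    exists_ne_zero_forall_dotProduct_eq_zero (fun i : {i // i < k} => A i) _ hcard
  refine ⟨v, hv0, fun i hi => hvk i (by simpa using hi), funext fun i => ?_⟩
  rcases lt_or_ge i k with hik | hki
  · exact hv ⟨i, hik⟩
  · refine sum_eq_zero fun j _ => ?_
    rcases le_or_gt j k with hjk | hkj
    · rcases (hjk.trans hki).lt_or_eq with hji | rfl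
      · exact mul_eq_zero_of_left (hA hji) _
      · exact mul_eq_zero_of_left (le_antisymm hjk hki ▸ hk) _
    · exact mul_eq_zero_of_right _ (hvk j (by simpa using hkj))

theorem exists_vecMul_eq_zero_of_isUpperTriangular {A : Matrix ι ι F} (hA : A.IsUpperTriangular)
    {k : ι} (hk : A k k = 0) :
    ∃ w : ι → F, w ≠ 0 ∧ (∀ j, j < k → w j = 0) ∧ w ᵥ* A = 0 := by
  obtain ⟨w, hw0, hwk, hw⟩ := exists_mulVec_eq_zero_of_isUpperTriangular
    (A := (Aᵀ : Matrix ιᵒᵈ ιᵒᵈ F)) hA.transpose (k := OrderDual.toDual k) hk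
  exact ⟨w, hw0, hwk, (mulVec_transpose A w).symm.trans hw⟩

theorem det_eq_zero_iff_of_isUpperTriangular {A : Matrix ι ι F} (hA : A.IsUpperTriangular) :
    A.det = 0 ↔ ∃ k, A k k = 0 := by
  simp [det_of_isUpperTriangular hA, prod_eq_zero_iff]

end Dimension

variable [LinearOrder ι]

/-- `v` vanishes after `k` and `w` before `k`, so `vecMulVec v w` lives in the upper triangular
rectangle `{i ≤ k} × {j ≥ k}` whose corner is the diagonal position `(k, k)`. -/
structure IsCornerPair (k : ι) (v w : ι → F) : Prop where
  left_ne_zero : v ≠ 0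
  right_ne_zero : w ≠ 0
  left_eq_zero : ∀ i, k < i → v i = 0
  right_eq_zero : ∀ j, j < k → w j = 0

namespace IsCornerPair

variable {k : ι} {v w : ι → F}

theorem isUpperTriangular (h : IsCornerPair k v w) : (vecMulVec v w).IsUpperTriangular := by
  intro i j hji
  rcases lt_or_ge k i with hki | hik
  · simp [vecMulVec_apply, h.left_eq_zero i hki]
  · simp [vecMulVec_apply, h.right_eq_zero j (hji.trans_le hik)]

theorem mul_self_eq_zero (h : IsCornerPair k v w) {i : ι} (hi : i ≠ k) : v i * w i = 0 := by
  rcases hi.lt_or_gt with hik | hki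
  · rw [h.right_eq_zero i hik, mul_zero]
  · rw [h.left_eq_zero i hki, zero_mul]

variable [Fintype ι] [Nontrivial ι]

theorem isVertex (h : IsCornerPair k v w) :
    (vecMulVec v w).IsUpperTriangular ∧ vecMulVec v w ≠ 0 ∧ (vecMulVec v w).det = 0 := by
  obtain ⟨i, hi⟩ := exists_ne k
  refine ⟨h.isUpperTriangular, vecMulVec_ne_zero h.left_ne_zero h.right_ne_zero, ?_⟩
  exact (det_eq_zero_iff_of_isUpperTriangular h.isUpperTriangular).mpr ⟨i, h.mul_self_eq_zero hi⟩

theorem one_sub_isVertex (h : IsCornerPair k v w) (hk : v k * w k = 1) :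
    (1 - vecMulVec v w).IsUpperTriangular ∧ 1 - vecMulVec v w ≠ 0 ∧
      (1 - vecMulVec v w).det = 0 := by
  obtain ⟨i, hi⟩ := exists_ne k
  have hU : (1 - vecMulVec v w).IsUpperTriangular := blockTriangular_one.sub h.isUpperTriangular
  refine ⟨hU, fun h0 => ?_, (det_eq_zero_iff_of_isUpperTriangular hU).mpr
    ⟨k, by simp [vecMulVec_apply, hk]⟩⟩
  simpa [vecMulVec_apply, h.mul_self_eq_zero hi] using congrFun₂ h0 i i

end IsCornerPair

variable [Fintype ι]

theorem exists_isCornerPair_of_det_eq_zero {A : Matrix ι ι F} (hA : A.IsUpperTriangular)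
    (hdet : A.det = 0) : ∃ k v w, IsCornerPair k v w ∧ A *ᵥ v = 0 ∧ w ᵥ* A = 0 := by
  obtain ⟨k, hk⟩ := (det_eq_zero_iff_of_isUpperTriangular hA).mp hdet
  obtain ⟨v, hv0, hvk, hv⟩ := exists_mulVec_eq_zero_of_isUpperTriangular hA hk
  obtain ⟨w, hw0, hwk, hw⟩ := exists_vecMul_eq_zero_of_isUpperTriangular hA hk
  exact ⟨k, v, w, ⟨hv0, hw0, hvk, hwk⟩, hv, hw⟩

variable [BoundedOrder ι] {m : ι}

theorem IsCornerPair.exists_orthogonal_of_bot_top (hm : ⊥ < m) (hm' : m < ⊤)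
    {v w v' w' : ι → F} (h : IsCornerPair ⊥ v w) (h' : IsCornerPair ⊤ v' w') :
    ∃ k u z, IsCornerPair k u z ∧ w ⬝ᵥ u = 0 ∧ w' ⬝ᵥ u = 0 ∧ z ⬝ᵥ v = 0 ∧ z ⬝ᵥ v' = 0 := by
  classical
  obtain ⟨u, hu0, hum, hwu⟩ := exists_ne_zero_forall_dotProduct_eq_zero (fun _ : Unit => w)
    {j | j ≤ m} (by simpa using one_lt_card.mpr ⟨⊥, by simp, m, by simp, hm.ne⟩)
  obtain ⟨z, hz0, hzm, hv'z⟩ := exists_ne_zero_forall_dotProduct_eq_zero (fun _ : Unit => v')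
    {j | m ≤ j} (by simpa using one_lt_card.mpr ⟨m, by simp, ⊤, by simp, hm'.ne⟩)
  refine ⟨m, u, z, ⟨hu0, hz0, fun i hi => hum i (by simpa using hi),
    fun j hj => hzm j (by simpa using hj)⟩, hwu (), ?_, ?_, by rw [dotProduct_comm, hv'z ()]⟩
  · refine dotProduct_eq_zero_of_forall_or fun j => ?_
    rcases le_or_gt j m with hjm | hmj
    · exact .inl (h'.right_eq_zero j (hjm.trans_lt hm'))
    · exact .inr (hum j (by simpa using hmj))
  · refine dotProduct_eq_zero_of_forall_or fun j => ?_
    rcases lt_or_ge j m with hjm | hmj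
    · exact .inl (hzm j (by simpa using hjm))
    · exact .inr (h.left_eq_zero j (hm.trans_le hmj))

theorem IsCornerPair.exists_orthogonal (hm : ⊥ < m) (hm' : m < ⊤) {k k' : ι}
    {v w v' w' : ι → F} (h : IsCornerPair k v w) (h' : IsCornerPair k' v' w') :
    ∃ k u z, IsCornerPair k u z ∧ w ⬝ᵥ u = 0 ∧ w' ⬝ᵥ u = 0 ∧ z ⬝ᵥ v = 0 ∧ z ⬝ᵥ v' = 0 := by
  classical
  have hcard : 2 < Fintype.card ι := two_lt_card.mpr
    ⟨⊥, mem_univ _, m, mem_univ _, ⊤, mem_univ _, hm.ne, (hm.trans hm').ne, hm'.ne⟩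
  by_cases hbot : ⊥ < k ∧ ⊥ < k'
  · obtain ⟨z, hz0, -, hz⟩ := exists_ne_zero_forall_dotProduct_eq_zero ![v, v'] univ
      (by simpa using hcard)
    refine ⟨⊥, Pi.single ⊥ 1, z, ⟨by simp, hz0, fun i hi => Pi.single_eq_of_ne hi.ne' _,
      fun j hj => absurd hj not_lt_bot⟩, ?_, ?_, ?_, ?_⟩
    · simp [h.right_eq_zero ⊥ hbot.1]
    · simp [h'.right_eq_zero ⊥ hbot.2]
    · simpa [dotProduct_comm] using hz 0
    · simpa [dotProduct_comm] using hz 1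
  by_cases htop : k < ⊤ ∧ k' < ⊤
  · obtain ⟨u, hu0, -, hu⟩ := exists_ne_zero_forall_dotProduct_eq_zero ![w, w'] univ
      (by simpa using hcard)
    refine ⟨⊤, u, Pi.single ⊤ 1, ⟨hu0, by simp, fun i hi => absurd hi not_top_lt,
      fun j hj => Pi.single_eq_of_ne hj.ne _⟩, hu 0, hu 1, ?_, ?_⟩
    · simp [h.left_eq_zero ⊤ htop.1]
    · simp [h'.left_eq_zero ⊤ htop.2]
  have hbt : (k = ⊥ ∧ k' = ⊤) ∨ (k' = ⊥ ∧ k = ⊤) := by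
    simp only [not_and_or, not_lt, le_bot_iff, top_le_iff] at hbot htop
    rcases hbot with rfl | rfl <;> rcases htop with h | h <;> simp_all [hm.trans hm' |>.ne]
  rcases hbt with ⟨rfl, rfl⟩ | ⟨rfl, rfl⟩
  · exact h.exists_orthogonal_of_bot_top hm hm' h'
  · obtain ⟨k, u, z, hp, h1, h2, h3, h4⟩ := h'.exists_orthogonal_of_bot_top hm hm' h
    exact ⟨k, u, z, hp, h2, h1, h4, h3⟩

end Matrix

namespace SimpleGraph

variable {V : Type*} {G : SimpleGraph V} {a b : V}

theorem four_le_edist (hab : a ≠ b) (h₁ : ¬G.Adj a b) (h₂ : ∀ x, G.Adj a x → ¬G.Adj x b)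
    (h₃ : ∀ x y, G.Adj a x → G.Adj x y → ¬G.Adj y b) : 4 ≤ G.edist a b := by
  refine le_iInf fun p => ?_
  match p with
  | .nil => exact absurd rfl hab
  | .cons hb .nil => exact absurd hb h₁
  | .cons hx (.cons hb .nil) => exact absurd hb (h₂ _ hx)
  | .cons hx (.cons hy (.cons hb .nil)) => exact absurd hb (h₃ _ _ hx hy)
  | .cons _ (.cons _ (.cons _ (.cons _ q))) =>
    exact_mod_cast Nat.le_add_left 4 q.length

end SimpleGraph

section OrthoGraph

open SimpleGraph

variable {F : Type*} [Field F] {n : ℕ}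

abbrev OrthoVertex (F : Type*) [Field F] (n : ℕ) :=
  {A : Matrix (Fin n) (Fin n) F // A.BlockTriangular id ∧ A ≠ 0 ∧ A.det = 0}

theorem orthoGraph_edist_le_one {X Y : OrthoVertex F n}
    (h : X.1 * Y.1 = 0) (h' : Y.1 * X.1 = 0) : (orthoGraph F n).edist X Y ≤ 1 := by
  rw [edist_le_one_iff_adj_or_eq]
  by_cases hXY : X = Y
  · exact .inr hXY
  · exact .inl ⟨hXY, h, h'⟩

theorem ediam_orthoGraph_le (hn : 3 ≤ n) : (orthoGraph F n).ediam ≤ 4 := by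
  have : NeZero n := ⟨by omega⟩
  have : Nontrivial (Fin n) := Fin.nontrivial_iff_two_le.mpr (by omega)
  have hm : (⊥ : Fin n) < ⟨1, by omega⟩ := by simp [Fin.lt_def, bot_eq_zero]
  have hm' : (⟨1, by omega⟩ : Fin n) < ⊤ := Fin.lt_def.mpr (show 1 < n - 1 by omega)
  refine ediam_le_of_edist_le fun X Y => ?_
  obtain ⟨k, v, w, hp, hXv, hwX⟩ := exists_isCornerPair_of_det_eq_zero X.2.1 X.2.2.2
  obtain ⟨k', v', w', hp', hYv, hwY⟩ := exists_isCornerPair_of_det_eq_zero Y.2.1 Y.2.2.2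
  obtain ⟨_, u, z, hq, hwu, hw'u, hzv, hzv'⟩ := hp.exists_orthogonal hm hm' hp'
  let P : OrthoVertex F n := ⟨_, hp.isVertex⟩
  let P' : OrthoVertex F n := ⟨_, hp'.isVertex⟩
  let M : OrthoVertex F n := ⟨_, hq.isVertex⟩
  calc (orthoGraph F n).edist X Y
      ≤ (orthoGraph F n).edist X P + ((orthoGraph F n).edist P M +
          ((orthoGraph F n).edist M P' + (orthoGraph F n).edist P' Y)) :=
        SimpleGraph.edist_triangle.trans <| add_le_add le_rfl <|
          SimpleGraph.edist_triangle.trans <| add_le_add le_rfl SimpleGraph.edist_triangle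
    _ ≤ 1 + (1 + (1 + 1)) := by
        gcongr
        · exact orthoGraph_edist_le_one (by simp [P, mul_vecMulVec, hXv])
            (by simp [P, vecMulVec_mul, hwX])
        · exact orthoGraph_edist_le_one (vecMulVec_mul_vecMulVec_eq_zero hwu)
            (vecMulVec_mul_vecMulVec_eq_zero hzv)
        · exact orthoGraph_edist_le_one (vecMulVec_mul_vecMulVec_eq_zero hzv')
            (vecMulVec_mul_vecMulVec_eq_zero hw'u)
        · exact orthoGraph_edist_le_one (by simp [P', vecMulVec_mul, hwY])
            (by simp [P', mul_vecMulVec, hYv])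
    _ = 4 := by norm_num

theorem exists_smul_of_orthoGraph_adj {a b : Fin n → F} {X Y}
    (h : (orthoGraph F n).Adj X Y) (hX : X.1 = 1 - vecMulVec a b) :
    ∃ c : F, c ≠ 0 ∧ Y.1 = c • vecMulVec a b := by
  obtain ⟨c, hc⟩ := exists_eq_smul_vecMulVec_of_mul_one_sub_eq_zero (hX ▸ h.2.2) (hX ▸ h.2.1)
  exact ⟨c, fun hc0 => Y.2.2.1 (by simpa [hc0] using hc), hc⟩

theorem four_le_ediam_orthoGraph (hn : 3 ≤ n) : 4 ≤ (orthoGraph F n).ediam := by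
  have : NeZero n := ⟨by omega⟩
  have : Nontrivial (Fin n) := Fin.nontrivial_iff_two_le.mpr (by omega)
  set m : Fin n := ⟨1, by omega⟩
  have hm : ⊥ < m := by simp [m, Fin.lt_def, bot_eq_zero]
  have hm' : m < ⊤ := Fin.lt_def.mpr (show 1 < n - 1 by omega)
  have hbt : (⊥ : Fin n) ≠ ⊤ := (hm.trans hm').ne
  have hP : IsCornerPair (⊥ : Fin n) (Pi.single ⊥ (1 : F)) (Pi.single ⊥ 1) :=
    ⟨by simp, by simp, fun i hi => Pi.single_eq_of_ne hi.ne' _, fun j hj => absurd hj not_lt_bot⟩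
  have hQ : IsCornerPair (⊤ : Fin n) (Pi.single ⊤ (1 : F) - Pi.single ⊥ 1) (Pi.single ⊤ (1 : F)) :=
    ⟨fun h => by simpa [hbt.symm] using congrFun h ⊤, by simp, fun i hi => absurd hi not_top_lt,
      fun j hj => Pi.single_eq_of_ne hj.ne _⟩
  refine le_trans (four_le_edist (G := orthoGraph F n)
    (a := ⟨_, hP.one_sub_isVertex (by simp)⟩) (b := ⟨_, hQ.one_sub_isVertex (by simp [hbt.symm])⟩)
    ?_ ?_ ?_ ?_) edist_le_ediam
  · intro h
    simpa [vecMulVec_apply, hbt.symm] using congrFun₂ (congrArg Subtype.val h) ⊥ ⊥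
  · intro h
    obtain ⟨c, -, hc⟩ := exists_smul_of_orthoGraph_adj h rfl
    simpa [vecMulVec_apply, hm.ne', hm'.ne] using congrFun₂ hc m m
  · intro X hAX hXB
    obtain ⟨c, hc0, hc⟩ := exists_smul_of_orthoGraph_adj hAX rfl
    obtain ⟨d, -, hd⟩ := exists_smul_of_orthoGraph_adj hXB.symm rfl
    exact hc0 (by simpa [vecMulVec_apply, hbt] using congrFun₂ (hc.symm.trans hd) ⊥ ⊥)
  · intro X Y hAX hXY hYB
    obtain ⟨c, hc0, hc⟩ := exists_smul_of_orthoGraph_adj hAX rfl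
    obtain ⟨d, hd0, hd⟩ := exists_smul_of_orthoGraph_adj hYB.symm rfl
    simpa [hc, hd, vecMulVec_mul_vecMulVec, vecMulVec_apply, hc0, hd0]
      using congrFun₂ hXY.2.1 ⊥ ⊤

end OrthoGraph

/-- For `n ≥ 3` the diameter of the orthogonality graph `O(Tₙ)` is exactly `4`. -/
theorem stmt_9 {F : Type*} [Field F] {n : ℕ} (hn : 3 ≤ n) :
    (orthoGraph F n).ediam = 4 :=
  le_antisymm (ediam_orthoGraph_le hn) (four_le_ediam_orthoGraph hn)
end

section
/- Let n ≥ 3 and A, B ∈ T_n be nonzero singular upper triangular matrices each having some zero diagonal entry at a position (i,i) with 2 ≤ i ≤ n-1 (for A) and (j,j) with 2 ≤ j ≤ n-1 (for B). Then the distance between A and B in the orthogonality graph O(T_n) is at most 4, realized by a path A - R_i - E_{1n} - R_j - B where R_i, R_j are rank-one matrices with zero first column and zero last row. -/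
/-!
If `A i i = 0` for an upper triangular `A`, the leading `(i+1) × (i+1)` block of `A` is singular,
which gives a kernel vector `x` of `A` supported on indices `≤ i`; the same argument for `Aᵀ`,
upper triangular for the reversed order, gives a left kernel vector `y` supported on indices
`≥ i`. The rank-one matrix `R = x yᵀ` is then upper triangular with `A R = R A = 0`. When
`0 < i < n - 1` its first column and last row vanish, so `R` is orthogonal to `E₁ₙ` as well, and
`A - Rᵢ - E₁ₙ - Rⱼ - B` is a walk in the orthogonality graph.
-/

open Matrix

namespace Matrix

section Rank

variable {K m n : Type*} [Field K] [Fintype n]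

theorem rank_eq_zero_iff {A : Matrix m n K} : A.rank = 0 ↔ A = 0 := by
  classical
  rw [rank, Submodule.finrank_eq_zero, LinearMap.range_eq_bot, ← toLin'_apply',
    LinearEquiv.map_eq_zero_iff]

theorem rank_vecMulVec_of_ne_zero {x : m → K} {y : n → K} (hx : x ≠ 0) (hy : y ≠ 0) :
    (vecMulVec x y).rank = 1 := by
  refine le_antisymm (rank_vecMulVec_le x y) (Nat.one_le_iff_ne_zero.mpr fun h => ?_)
  obtain ⟨k, hk⟩ := Function.ne_iff.mp hx
  obtain ⟨l, hl⟩ := Function.ne_iff.mp hy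
  exact mul_ne_zero hk hl congr($(rank_eq_zero_iff.mp h) k l)

theorem rank_single_one [DecidableEq m] [DecidableEq n] (a : m) (b : n) :
    (single a b (1 : K)).rank = 1 := by
  rw [single_eq_single_vecMulVec_single]
  exact rank_vecMulVec_of_ne_zero (Pi.single_ne_zero_iff.mpr one_ne_zero)
    (Pi.single_ne_zero_iff.mpr one_ne_zero)

theorem ne_zero_and_det_eq_zero_of_rank_eq_one [DecidableEq n] {A : Matrix n n K}
    (hn : 2 ≤ Fintype.card n) (hA : A.rank = 1) : A ≠ 0 ∧ A.det = 0 := by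
  refine ⟨fun h => by simp [h, rank_zero] at hA, ?_⟩
  by_contra hdet
  have := rank_of_isUnit A ((isUnit_iff_isUnit_det A).mpr (Ne.isUnit hdet))
  omega

end Rank

section Single

variable {α l m n : Type*} [Semiring α] [Fintype m] [DecidableEq m]

theorem mul_single_eq_zero [DecidableEq n] {R : Matrix l m α} {a : m} (h : ∀ k, R k a = 0)
    (b : n) (c : α) : R * single a b c = 0 := by
  ext p q
  by_cases hq : q = b
  · simp [hq, h]
  · simp [hq]

theorem single_mul_eq_zero [DecidableEq l] {R : Matrix m n α} {b : m} (h : ∀ k, R b k = 0)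
    (a : l) (c : α) : single a b c * R = 0 := by
  ext p q
  by_cases hp : p = a
  · simp [hp, h]
  · simp [hp]

end Single

section UpperTriangular

variable {K ι : Type*} [Field K] [Fintype ι] [LinearOrder ι]

theorem exists_mulVec_eq_zero_of_diag_eq_zero {A : Matrix ι ι K} (hA : A.IsUpperTriangular)
    {i : ι} (hi : A i i = 0) : ∃ x ≠ 0, A *ᵥ x = 0 ∧ ∀ l, i < l → x l = 0 := by
  let A' : Matrix {l // l ≤ i} {l // l ≤ i} K := A.submatrix Subtype.val Subtype.val
  have hdet : A'.det = 0 := by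
    rw [det_of_isUpperTriangular (M := A') hA.submatrix]
    exact Finset.prod_eq_zero (i := ⟨i, le_rfl⟩) (Finset.mem_univ _) hi
  obtain ⟨v, hv0, hv⟩ := exists_mulVec_eq_zero_iff.mpr hdet
  set x : ι → K := fun l => if h : l ≤ i then v ⟨l, h⟩ else 0
  refine ⟨x, fun h => hv0 ?_, ?_, fun l hl => dif_neg hl.not_ge⟩
  · ext ⟨l, hl⟩
    simpa [x, hl] using congrFun h l
  · ext k
    have hsum : (A *ᵥ x) k = ∑ l : {l // l ≤ i}, A k l * v l := by
      simp only [mulVec, dotProduct]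
      have hout : ∑ l : {l // ¬ l ≤ i}, A k l * x l = 0 :=
        Finset.sum_eq_zero fun l _ => by simp only [x, dif_neg l.2, mul_zero]
      rw [← Fintype.sum_subtype_add_sum_subtype (fun l => l ≤ i), hout, add_zero]
      exact Finset.sum_congr rfl fun l _ => by simp only [x, dif_pos l.2]
    rw [hsum, Pi.zero_apply]
    by_cases hk : k ≤ i
    · exact congrFun hv ⟨k, hk⟩
    · exact Finset.sum_eq_zero fun l _ => by
        rw [hA (lt_of_le_of_lt l.2 (not_le.mp hk)), zero_mul]

theorem exists_vecMul_eq_zero_of_diag_eq_zero {A : Matrix ι ι K} (hA : A.IsUpperTriangular)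
    {i : ι} (hi : A i i = 0) : ∃ y ≠ 0, y ᵥ* A = 0 ∧ ∀ l, l < i → y l = 0 := by
  obtain ⟨y, hy0, hy, hys⟩ :=
    exists_mulVec_eq_zero_of_diag_eq_zero (ι := ιᵒᵈ) (A := Aᵀ) hA.transpose hi
  exact ⟨y, hy0, (mulVec_transpose A y).symm.trans hy, fun l hl => hys l hl⟩

theorem exists_rank_eq_one_annihilator {A : Matrix ι ι K} (hA : A.IsUpperTriangular) {i : ι}
    (hi : A i i = 0) :
    ∃ R : Matrix ι ι K, R.IsUpperTriangular ∧ R.rank = 1 ∧ A * R = 0 ∧ R * A = 0 ∧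
      (∀ k l, l < i → R k l = 0) ∧ (∀ k l, i < k → R k l = 0) := by
  obtain ⟨x, hx0, hAx, hx⟩ := exists_mulVec_eq_zero_of_diag_eq_zero hA hi
  obtain ⟨y, hy0, hyA, hy⟩ := exists_vecMul_eq_zero_of_diag_eq_zero hA hi
  have hcol (k l : ι) (hl : l < i) : vecMulVec x y k l = 0 := by
    rw [vecMulVec_apply, hy l hl, mul_zero]
  have hrow (k l : ι) (hk : i < k) : vecMulVec x y k l = 0 := by
    rw [vecMulVec_apply, hx k hk, zero_mul]
  refine ⟨vecMulVec x y, fun k l hlk => ?_, rank_vecMulVec_of_ne_zero hx0 hy0,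
    by rw [mul_vecMulVec, hAx, zero_vecMulVec], by rw [vecMulVec_mul, hyA, vecMulVec_zero],
    hcol, hrow⟩
  rcases lt_or_ge i k with hik | hki
  · exact hrow k l hik
  · exact hcol k l (lt_of_lt_of_le hlk hki)

end UpperTriangular

end Matrix

section OrthoGraph

variable {F : Type*} [Field F] {n : ℕ}

theorem orthoGraph_edist_le_one_s19
    {X Y : {A : Matrix (Fin n) (Fin n) F // A.BlockTriangular id ∧ A ≠ 0 ∧ A.det = 0}}
    (hXY : X.1 * Y.1 = 0) (hYX : Y.1 * X.1 = 0) : (orthoGraph F n).edist X Y ≤ 1 :=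
  SimpleGraph.edist_le_one_iff_adj_or_eq.mpr (or_iff_not_imp_right.mpr fun h => ⟨h, hXY, hYX⟩)

def orthoGraph.vertexOfRankEqOne (hn : 2 ≤ n) (R : Matrix (Fin n) (Fin n) F)
    (hR : R.IsUpperTriangular) (hR1 : R.rank = 1) :
    {A : Matrix (Fin n) (Fin n) F // A.BlockTriangular id ∧ A ≠ 0 ∧ A.det = 0} :=
  ⟨R, hR, ne_zero_and_det_eq_zero_of_rank_eq_one (by rwa [Fintype.card_fin]) hR1⟩

end OrthoGraph

/-- If `A`, `B` are nonzero singular upper triangular matrices (`n ≥ 3`), each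
with a zero diagonal entry at an interior position (1-based `2 ≤ i ≤ n - 1`,
i.e. `1 ≤ i ≤ n - 2` for `Fin n`), then `d(A, B) ≤ 4` in `O(Tₙ)`, realized by a
path `A - Rᵢ - E₁ₙ - Rⱼ - B` with `Rᵢ`, `Rⱼ` rank-one matrices having zero
first column and zero last row. -/
theorem stmt_19 {F : Type*} [Field F] {n : ℕ} (hn : 3 ≤ n)
    (A B : Matrix (Fin n) (Fin n) F)
    (hA : A.BlockTriangular id)
    (hB : B.BlockTriangular id)
    (i : Fin n) (hii : A i i = 0) (hi1 : 1 ≤ (i : ℕ)) (hi2 : (i : ℕ) ≤ n - 2)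
    (j : Fin n) (hjj : B j j = 0) (hj1 : 1 ≤ (j : ℕ)) (hj2 : (j : ℕ) ≤ n - 2) :
    (∃ Ri Rj : Matrix (Fin n) (Fin n) F,
      Ri.BlockTriangular id ∧ Rj.BlockTriangular id ∧
      Ri.rank = 1 ∧ Rj.rank = 1 ∧
      (∀ k : Fin n, Ri k ⟨0, by omega⟩ = 0) ∧ (∀ k : Fin n, Ri ⟨n - 1, by omega⟩ k = 0) ∧
      (∀ k : Fin n, Rj k ⟨0, by omega⟩ = 0) ∧ (∀ k : Fin n, Rj ⟨n - 1, by omega⟩ k = 0) ∧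
      A * Ri = 0 ∧ Ri * A = 0 ∧
      Ri * Matrix.single (⟨0, by omega⟩ : Fin n) (⟨n - 1, by omega⟩ : Fin n) (1 : F) = 0 ∧
      Matrix.single (⟨0, by omega⟩ : Fin n) (⟨n - 1, by omega⟩ : Fin n) (1 : F) * Ri = 0 ∧
      Rj * Matrix.single (⟨0, by omega⟩ : Fin n) (⟨n - 1, by omega⟩ : Fin n) (1 : F) = 0 ∧
      Matrix.single (⟨0, by omega⟩ : Fin n) (⟨n - 1, by omega⟩ : Fin n) (1 : F) * Rj = 0 ∧
      B * Rj = 0 ∧ Rj * B = 0) ∧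
    ∀ X Y : {M : Matrix (Fin n) (Fin n) F // M.BlockTriangular id ∧ M ≠ 0 ∧ M.det = 0},
      X.1 = A → Y.1 = B → (orthoGraph F n).edist X Y ≤ 4 := by
  set first : Fin n := ⟨0, by omega⟩
  set last : Fin n := ⟨n - 1, by omega⟩
  obtain ⟨Ri, hRi, hRi1, hARi, hRiA, hRicol, hRirow⟩ := exists_rank_eq_one_annihilator hA hii
  obtain ⟨Rj, hRj, hRj1, hBRj, hRjB, hRjcol, hRjrow⟩ := exists_rank_eq_one_annihilator hB hjj
  have hicol (k : Fin n) : Ri k first = 0 := hRicol k first (show 0 < (i : ℕ) by omega)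
  have hirow (k : Fin n) : Ri last k = 0 := hRirow last k (show (i : ℕ) < n - 1 by omega)
  have hjcol (k : Fin n) : Rj k first = 0 := hRjcol k first (show 0 < (j : ℕ) by omega)
  have hjrow (k : Fin n) : Rj last k = 0 := hRjrow last k (show (j : ℕ) < n - 1 by omega)
  refine ⟨⟨Ri, Rj, hRi, hRj, hRi1, hRj1, hicol, hirow, hjcol, hjrow, hARi, hRiA,
    mul_single_eq_zero hicol _ _, single_mul_eq_zero hirow _ _,
    mul_single_eq_zero hjcol _ _, single_mul_eq_zero hjrow _ _, hBRj, hRjB⟩, ?_⟩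
  intro X Y hX hY
  have hn2 : 2 ≤ n := by omega
  let vRi := orthoGraph.vertexOfRankEqOne hn2 Ri hRi hRi1
  let vRj := orthoGraph.vertexOfRankEqOne hn2 Rj hRj hRj1
  let vE := orthoGraph.vertexOfRankEqOne hn2 (single first last (1 : F))
    (blockTriangular_single (Fin.mk_le_mk.mpr (Nat.zero_le _)) 1) (rank_single_one first last)
  let G := orthoGraph F n
  calc G.edist X Y ≤ G.edist X vRi + (G.edist vRi vE + (G.edist vE vRj + G.edist vRj Y)) := by
        grw [← SimpleGraph.edist_triangle, ← SimpleGraph.edist_triangle,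
          ← SimpleGraph.edist_triangle]
    _ ≤ 1 + (1 + (1 + 1)) := by
        gcongr
        · exact orthoGraph_edist_le_one_s19 (hX ▸ hARi) (hX ▸ hRiA)
        · exact orthoGraph_edist_le_one_s19 (mul_single_eq_zero hicol _ _)
            (single_mul_eq_zero hirow _ _)
        · exact orthoGraph_edist_le_one_s19 (single_mul_eq_zero hjrow _ _)
            (mul_single_eq_zero hjcol _ _)
        · exact orthoGraph_edist_le_one_s19 (hY ▸ hRjB) (hY ▸ hBRj)
    _ = 4 := by norm_num
end
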